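/- Let G be a finite simple graph with vertex set V whose automorphism group has orbits O_1, …, O_k on V, and let R ⊆ V be a reduct of the full attribute set V (i.e., ≡_R coincides with ≡_V and no proper subset R' ⊊ R satisfies ≡_{R'} = ≡_V). Then there is exactly one index j ∈ {1,…,k} with R ∩ O_j = ∅, and |R ∩ O_i| = 1 for every i ≠ j. -/

import Mathlib

/-- The orbit of a vertex `x` under the automorphism group of the graph `G`:
`O(x) = {φ(x) : φ an automorphism of G}`. -/
def orb {V : Type*} (G : SimpleGraph V) (x : V) : Set V :=
  {y | ∃ φ : G ≃g G, φ x = y}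

/-- The indiscernibility relation `x ≡_A y` iff `O(x) ∩ A = O(y) ∩ A`. -/
def Indis {V : Type*} (G : SimpleGraph V) (A : Set V) (x y : V) : Prop :=
  orb G x ∩ A = orb G y ∩ A

/-- The `≡_A`-equivalence class `O_A(x)` of a vertex `x`. -/
def eqCls {V : Type*} (G : SimpleGraph V) (A : Set V) (x : V) : Set V :=
  {y | Indis G A x y}

/-- `O(A) = ⋃_{a ∈ A} O(a)`. -/
def orbSet {V : Type*} (G : SimpleGraph V) (A : Set V) : Set V :=
  ⋃ a ∈ A, orb G a

/-- Lower approximation `L_A(Q) = {x | O_A(x) ⊆ Q}`. -/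
def lowerApprox {V : Type*} (G : SimpleGraph V) (A Q : Set V) : Set V :=
  {x | eqCls G A x ⊆ Q}

/-- Upper approximation `U_A(Q) = {x | O_A(x) ∩ Q ≠ ∅}`. -/
def upperApprox {V : Type*} (G : SimpleGraph V) (A Q : Set V) : Set V :=
  {x | (eqCls G A x ∩ Q).Nonempty}

/-- `R` is a reduct of the attribute set `A`: `R ⊆ A`, the relation `≡_R` coincides with
`≡_A`, and no proper subset of `R` yields the same indiscernibility relation as `A`. -/
def IsReduct {V : Type*} (G : SimpleGraph V) (A R : Set V) : Prop :=
  R ⊆ A ∧ (∀ x y : V, Indis G R x y ↔ Indis G A x y) ∧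
    ∀ R' : Set V, R' ⊂ R → ¬ (∀ x y : V, Indis G R' x y ↔ Indis G A x y)

/-!
The relation `≡_V` identifies exactly the vertices of a common orbit, so a reduct `R` must
separate orbits by their traces `O ∩ R`; in particular at most one orbit misses `R`.
By minimality, deleting any `a ∈ R` merges two distinct orbits whose traces then differ only
in `a`: one of them meets `R` exactly in `{a}`, and the other misses `R` altogether.
-/

section Orbits

variable {V : Type*} {G : SimpleGraph V} {x y : V}

lemma orb_eq_orbit (G : SimpleGraph V) (x : V) : orb G x = MulAction.orbit (G ≃g G) x := rfl

lemma orb_eq_of_mem (h : y ∈ orb G x) : orb G y = orb G x := by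
  rw [orb_eq_orbit, orb_eq_orbit, MulAction.orbit_eq_iff]
  exact h

lemma notMem_orb_of_ne {b : V} (hxy : orb G x ≠ orb G y) (hb : b ∈ orb G x) : b ∉ orb G y :=
  fun hb' => hxy ((orb_eq_of_mem hb).symm.trans (orb_eq_of_mem hb'))

lemma eq_orb_of_mem {S : Set V} (hS : ∃ z, S = orb G z) (hx : x ∈ S) : S = orb G x := by
  obtain ⟨z, rfl⟩ := hS
  exact (orb_eq_of_mem hx).symm

lemma indis_univ_iff : Indis G Set.univ x y ↔ orb G x = orb G y := by
  simp only [Indis, Set.inter_univ]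

end Orbits

namespace IsReduct

variable {V : Type*} {G : SimpleGraph V} {R : Set V} {a x y : V}

lemma inter_eq_iff (hR : IsReduct G Set.univ R) :
    orb G x ∩ R = orb G y ∩ R ↔ orb G x = orb G y :=
  (hR.2.1 x y).trans indis_univ_iff

lemma orb_eq_of_inter_eq_empty (hR : IsReduct G Set.univ R)
    (hx : orb G x ∩ R = ∅) (hy : orb G y ∩ R = ∅) : orb G x = orb G y :=
  hR.inter_eq_iff.mp (hx.trans hy.symm)

lemma exists_merged_by_erase (hR : IsReduct G Set.univ R) (ha : a ∈ R) :
    ∃ x y, orb G x ∩ (R \ {a}) = orb G y ∩ (R \ {a}) ∧ orb G x ≠ orb G y ∧ a ∈ orb G x := by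
  by_contra hsep
  refine hR.2.2 (R \ {a}) (Set.sdiff_singleton_ssubset.mpr ha) fun x y => ?_
  rw [indis_univ_iff]
  refine ⟨fun hxy => ?_, fun hxy => by rw [Indis, hxy]⟩
  by_contra hne
  have hax : a ∉ orb G x := fun hax => hsep ⟨x, y, hxy, hne, hax⟩
  have hay : a ∉ orb G y := fun hay => hsep ⟨y, x, hxy.symm, Ne.symm hne, hay⟩
  have herase : ∀ {S : Set V}, a ∉ S → S ∩ (R \ {a}) = S ∩ R := fun haS => by
    rw [← Set.inter_sdiff_assoc, Set.sdiff_singleton_eq_self fun h => haS h.1]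
  exact hne (hR.inter_eq_iff.mp (by rw [← herase hax, ← herase hay]; exact hxy))

lemma exists_inter_eq_empty_and_inter_eq_singleton (hR : IsReduct G Set.univ R) (ha : a ∈ R) :
    (∃ y, orb G y ∩ R = ∅) ∧ orb G a ∩ R = {a} := by
  obtain ⟨x, y, hxy, hne, hax⟩ := hR.exists_merged_by_erase ha
  have hay : a ∉ orb G y := notMem_orb_of_ne hne hax
  have hy : orb G y ∩ R = ∅ := by
    refine Set.eq_empty_of_forall_notMem fun b ⟨hby, hbR⟩ => ?_
    have hba : b ≠ a := fun h => hay (h ▸ hby)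
    have hbx : b ∈ orb G x := (hxy ▸ ⟨hby, hbR, hba⟩ : b ∈ orb G x ∩ (R \ {a})).1
    exact notMem_orb_of_ne hne hbx hby
  refine ⟨⟨y, hy⟩, ?_⟩
  rw [orb_eq_of_mem hax]
  refine Set.Subset.antisymm (fun b ⟨hbx, hbR⟩ => ?_) (Set.singleton_subset_iff.mpr ⟨hax, ha⟩)
  by_contra hba
  have hby : b ∈ orb G y := (hxy ▸ ⟨hbx, hbR, hba⟩ : b ∈ orb G y ∩ (R \ {a})).1
  exact hy.subset ⟨hby, hbR⟩

lemma orb_inter_eq_singleton (hR : IsReduct G Set.univ R) (ha : a ∈ R) :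
    orb G a ∩ R = {a} :=
  (hR.exists_inter_eq_empty_and_inter_eq_singleton ha).2

lemma exists_orb_inter_eq_empty [Nonempty V] (hR : IsReduct G Set.univ R) :
    ∃ y, orb G y ∩ R = ∅ := by
  obtain rfl | ⟨a, ha⟩ := R.eq_empty_or_nonempty
  · exact ⟨Classical.arbitrary V, Set.inter_empty _⟩
  · exact (hR.exists_inter_eq_empty_and_inter_eq_singleton ha).1

end IsReduct

theorem stmt_6_general {V : Type*} [Nonempty V] (G : SimpleGraph V) {k : ℕ}
    (Os : Fin k → Set V)
    (hOs : ∀ i, ∃ x : V, Os i = orb G x)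
    (hcover : ∀ x : V, ∃ i, x ∈ Os i)
    (hinj : Function.Injective Os)
    (R : Set V) (hR : IsReduct G Set.univ R) :
    ∃ j : Fin k, (∀ i, R ∩ Os i = ∅ ↔ i = j) ∧
      ∀ i, i ≠ j → (R ∩ Os i).ncard = 1 := by
  obtain ⟨y, hy⟩ := hR.exists_orb_inter_eq_empty
  obtain ⟨j, hyj⟩ := hcover y
  have hOj : Os j = orb G y := eq_orb_of_mem (hOs j) hyj
  have hempty_iff : ∀ i, R ∩ Os i = ∅ ↔ i = j := by
    refine fun i => ⟨fun hi => hinj ?_, fun hij => by rw [hij, hOj, Set.inter_comm, hy]⟩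
    obtain ⟨x, hx⟩ := hOs i
    rw [hx, Set.inter_comm] at hi
    rw [hx, hOj, hR.orb_eq_of_inter_eq_empty hi hy]
  refine ⟨j, hempty_iff, fun i hij => ?_⟩
  obtain ⟨a, haR, hai⟩ := Set.nonempty_iff_ne_empty.mpr (mt (hempty_iff i).mp hij)
  rw [eq_orb_of_mem (hOs i) hai, Set.inter_comm, hR.orb_inter_eq_singleton haR,
    Set.ncard_singleton]

/-- if the orbits of `G` are `O_1, …, O_k` and `R` is a reduct of the full
attribute set `V`, then there is exactly one index `j` with `R ∩ O_j = ∅`, and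
`|R ∩ O_i| = 1` for every `i ≠ j`. -/
theorem stmt_6 {V : Type*} [Fintype V] [Nonempty V] (G : SimpleGraph V) {k : ℕ}
    (Os : Fin k → Set V)
    (hOs : ∀ i, ∃ x : V, Os i = orb G x)
    (hcover : ∀ x : V, ∃ i, x ∈ Os i)
    (hinj : Function.Injective Os)
    (R : Set V) (hR : IsReduct G Set.univ R) :
    ∃ j : Fin k, (∀ i, R ∩ Os i = ∅ ↔ i = j) ∧
      ∀ i, i ≠ j → (R ∩ Os i).ncard = 1 :=
  stmt_6_general G Os hOs hcover hinj R hR
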